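/- arXiv:math/0310427 — 2 statements merged into one kernel-verified Lean document; each statement's English description precedes it below -/
import Mathlib

section
/- Let Y be a real-valued random variable whose law has an even density p with respect to Lebesgue measure (p measurable, nonnegative, p(−u) = p(u), ∫ p = 1). Then for every Borel set A ⊆ [−1,1], the probability that g(f(Y)) ∈ A equals ∫_A Σ_{k∈ℤ} p(u − 2k) du; in particular the law of the reflected variable g(f(Y)) has density u ↦ Σ_{k∈ℤ} p(u − 2k) on [−1,1] and density 0 outside [−1,1]. -/
open MeasureTheory

/-- The map `f : ℝ → [-2,2)`, `f u = ((u+2) mod 4) - 2`. -/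
noncomputable def f (u : ℝ) : ℝ := (u + 2) - 4 * (⌊(u + 2) / 4⌋ : ℝ) - 2

/-- The tent map `g : [-2,2) → [-1,1]`: `g u = u` on `[-1,1]`, `g u = 2 - u` on `(1,2)`,
`g u = -2 - u` on `[-2,-1)`. -/
noncomputable def g (u : ℝ) : ℝ := if u < -1 then -2 - u else if u ≤ 1 then u else 2 - u

/-!
`g ∘ f` folds the line onto `[-1,1]`: on the strip `[2k-1, 2k+1)` it is the translation
`u ↦ u - 2k` for even `k` and the reflection `u ↦ 2k - u` for odd `k`. Both are
measure preserving, so the strip contributes `∫_B p (v + 2k)` resp. `∫_B p (2k - v)` to the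
mass that `g ∘ f` sends into `B ⊆ [-1,1]`. Evenness of `p` turns the odd terms into
`∫_B p (v - 2k)`, and reindexing the even ones by `k ↦ -k` gives `∑ₖ ∫_B p (v - 2k)`.
-/

open Set
open scoped ENNReal

lemma measurable_f : Measurable f := by
  unfold f; fun_prop

lemma measurable_g : Measurable g := by
  unfold g
  exact Measurable.ite measurableSet_Iio (by fun_prop)
    (Measurable.ite measurableSet_Iic measurable_id (by fun_prop))

lemma measurable_g_f : Measurable fun u => g (f u) := measurable_g.comp measurable_f

lemma f_eq_sub_of_mem_Ico {m : ℤ} {u : ℝ} (hu : u ∈ Ico (4 * m - 2 : ℝ) (4 * m + 2)) :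
    f u = u - 4 * m := by
  have hfloor : ⌊(u + 2) / 4⌋ = m := by
    rw [Int.floor_eq_iff, le_div_iff₀ four_pos, div_lt_iff₀ four_pos]
    constructor <;> linarith [hu.1, hu.2]
  rw [f, hfloor]
  ring

lemma g_f_mem_Icc (u : ℝ) : g (f u) ∈ Icc (-1 : ℝ) 1 := by
  have h₁ : (⌊(u + 2) / 4⌋ : ℝ) ≤ (u + 2) / 4 := Int.floor_le _
  have h₂ : (u + 2) / 4 < ⌊(u + 2) / 4⌋ + 1 := Int.lt_floor_add_one _
  have hf₁ : -2 ≤ f u := by rw [f]; linarith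
  have hf₂ : f u < 2 := by rw [f]; linarith
  rw [g]
  split_ifs <;> constructor <;> linarith

lemma g_f_of_mem_Ico_even {m : ℤ} {u : ℝ} (hu : u ∈ Ico (4 * m - 1 : ℝ) (4 * m + 1)) :
    g (f u) = u - 4 * m := by
  obtain ⟨h₁, h₂⟩ := hu
  rw [f_eq_sub_of_mem_Ico ⟨by linarith, by linarith⟩, g]
  split_ifs <;> linarith

lemma g_f_of_mem_Ico_odd {m : ℤ} {u : ℝ} (hu : u ∈ Ico (4 * m + 1 : ℝ) (4 * m + 3)) :
    g (f u) = 4 * m + 2 - u := by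
  obtain ⟨h₁, h₂⟩ := hu
  rcases lt_or_ge u (4 * m + 2) with hlt | hge
  · rw [f_eq_sub_of_mem_Ico ⟨by linarith, hlt⟩, g]
    split_ifs <;> linarith
  · have hf : f u = u - 4 * (m + 1 : ℤ) :=
      f_eq_sub_of_mem_Ico ⟨by push_cast; linarith, by push_cast; linarith⟩
    rw [hf, g]
    push_cast
    split_ifs <;> linarith

lemma setLIntegral_preimage_inter_Ico {μ : Measure ℝ} [NullSingletonClass μ] {φ : ℝ → ℝ}
    (e : ℝ ≃ᵐ ℝ) (he : MeasurePreserving e μ μ) {a b : ℝ} {B : Set ℝ}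
    (hφ : EqOn φ e (Ico a b)) (hB : e ⁻¹' B ⊆ Icc a b) (F : ℝ → ℝ≥0∞) :
    ∫⁻ u in φ ⁻¹' B ∩ Ico a b, F u ∂μ = ∫⁻ v in B, F (e.symm v) ∂μ := by
  have hset : (φ ⁻¹' B ∩ Ico a b : Set ℝ) =ᵐ[μ] (e ⁻¹' B : Set ℝ) := by
    rw [inter_comm, hφ.inter_preimage_eq]
    simpa only [inter_eq_right.mpr hB] using
      (Ico_ae_eq_Icc (μ := μ) (a := a) (b := b)).inter (Filter.EventuallyEq.refl _ (e ⁻¹' B))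
  rw [setLIntegral_congr hset]
  simpa using he.setLIntegral_comp_preimage_emb e.measurableEmbedding (fun v => F (e.symm v)) B

def negOnEven : Equiv.Perm ℤ :=
  Function.Involutive.toPerm (fun k => if Even k then -k else k) fun k => by
    by_cases hk : Even k <;> simp [hk]

lemma negOnEven_two_mul (m : ℤ) : negOnEven (2 * m) = -(2 * m) := if_pos (even_two_mul m)

lemma negOnEven_two_mul_add_one (m : ℤ) : negOnEven (2 * m + 1) = 2 * m + 1 :=
  if_neg (Int.not_even_two_mul_add_one m)

section Fold

variable {P : ℝ → ℝ≥0∞} {B : Set ℝ}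

lemma setLIntegral_preimage_g_f_inter_even (hB : B ⊆ Icc (-1) 1) (m : ℤ) :
    ∫⁻ u in (fun u => g (f u)) ⁻¹' B ∩ Ico (4 * m - 1 : ℝ) (4 * m + 1), P u
      = ∫⁻ v in B, P (v + 4 * m) :=
  setLIntegral_preimage_inter_Ico (MeasurableEquiv.subRight (4 * m : ℝ))
    (measurePreserving_sub_right volume _) (fun _ hu => g_f_of_mem_Ico_even hu)
    (fun u hu => by
      have : u - 4 * m ∈ Icc (-1 : ℝ) 1 := hB hu
      constructor <;> linarith [this.1, this.2]) P

lemma setLIntegral_preimage_g_f_inter_odd (hB : B ⊆ Icc (-1) 1) (m : ℤ) :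
    ∫⁻ u in (fun u => g (f u)) ⁻¹' B ∩ Ico (4 * m + 1 : ℝ) (4 * m + 3), P u
      = ∫⁻ v in B, P (4 * m + 2 - v) := by
  rw [setLIntegral_preimage_inter_Ico (MeasurableEquiv.subLeft (4 * m + 2 : ℝ))
    (Measure.measurePreserving_sub_left volume _) (fun _ hu => g_f_of_mem_Ico_odd hu)
    (fun u hu => by
      have : 4 * m + 2 - u ∈ Icc (-1 : ℝ) 1 := hB hu
      constructor <;> linarith [this.1, this.2]) P]
  simp [MeasurableEquiv.subLeft, Equiv.subLeft, neg_add_eq_sub]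

lemma setLIntegral_preimage_g_f (heven : ∀ u, P (-u) = P u) (hBm : MeasurableSet B)
    (hB : B ⊆ Icc (-1) 1) :
    ∫⁻ u in (fun u => g (f u)) ⁻¹' B, P u = ∑' k : ℤ, ∫⁻ v in B, P (v - 2 * k) := by
  set piece : ℤ → Set ℝ := fun k => Ico (-1 + k • (2 : ℝ)) (-1 + (k + 1) • 2)
  have hpiece : ∀ k, ∫⁻ u in (fun u => g (f u)) ⁻¹' B ∩ piece k, P u
      = ∫⁻ v in B, P (v - 2 * negOnEven k) := by
    intro k
    obtain ⟨m, rfl | rfl⟩ := Int.even_or_odd' k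
    · have hI : piece (2 * m) = Ico (4 * m - 1 : ℝ) (4 * m + 1) := by
        simp only [piece, zsmul_eq_mul]; push_cast; ring_nf
      rw [hI, setLIntegral_preimage_g_f_inter_even hB, negOnEven_two_mul]
      congr 1; funext v; congr 1; push_cast; ring
    · have hI : piece (2 * m + 1) = Ico (4 * m + 1 : ℝ) (4 * m + 3) := by
        simp only [piece, zsmul_eq_mul]; push_cast; ring_nf
      rw [hI, setLIntegral_preimage_g_f_inter_odd hB, negOnEven_two_mul_add_one]
      congr 1; funext v; rw [← heven]; congr 1; push_cast; ring
  calc ∫⁻ u in (fun u => g (f u)) ⁻¹' B, P u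
      = ∑' k, ∫⁻ u in (fun u => g (f u)) ⁻¹' B ∩ piece k, P u := by
        rw [← lintegral_iUnion (fun k => (measurable_g_f hBm).inter measurableSet_Ico)
          fun i j hij => ((pairwise_disjoint_Ico_add_zsmul (-1 : ℝ) 2) hij).mono
            inter_subset_right inter_subset_right,
          ← inter_iUnion, iUnion_Ico_add_zsmul two_pos, inter_univ]
    _ = ∑' k : ℤ, ∫⁻ v in B, P (v - 2 * k) :=
        (tsum_congr hpiece).trans (negOnEven.tsum_eq fun k : ℤ => ∫⁻ v in B, P (v - 2 * k))

lemma map_withDensity_g_f (hP : Measurable P) (heven : ∀ u, P (-u) = P u) :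
    (volume.withDensity P).map (fun u => g (f u))
      = volume.withDensity ((Icc (-1 : ℝ) 1).indicator fun v => ∑' k : ℤ, P (v - 2 * k)) := by
  ext B hB
  have hpre : (fun u => g (f u)) ⁻¹' B = (fun u => g (f u)) ⁻¹' (Icc (-1) 1 ∩ B) := by
    ext u
    simp [g_f_mem_Icc u]
  rw [Measure.map_apply measurable_g_f hB, withDensity_apply _ (measurable_g_f hB),
    withDensity_apply _ hB, setLIntegral_indicator measurableSet_Icc, hpre,
    setLIntegral_preimage_g_f heven (measurableSet_Icc.inter hB) inter_subset_left]
  exact (lintegral_tsum fun k => (hP.comp (measurable_sub_const _)).aemeasurable).symm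

end Fold

lemma withDensity_ofReal_toReal {α : Type*} [MeasurableSpace α] {μ : Measure α}
    {F : α → ℝ≥0∞} (hF : AEMeasurable F μ) [IsFiniteMeasure (μ.withDensity F)] :
    μ.withDensity (fun a => ENNReal.ofReal (F a).toReal) = μ.withDensity F := by
  have hfin : ∫⁻ a, F a ∂μ ≠ ∞ := by
    simpa [withDensity_apply _ MeasurableSet.univ] using measure_ne_top (μ.withDensity F) univ
  refine withDensity_congr_ae ?_
  filter_upwards [ae_lt_top' hF hfin] with a ha using ENNReal.ofReal_toReal ha.ne

/-- `tsum_toReal_eq` needs no summability: a divergent series gives `0` on both sides. -/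
lemma ofReal_tsum_eq_ofReal_toReal_tsum {ι : Type*} {a : ι → ℝ} (ha : ∀ i, 0 ≤ a i) :
    ENNReal.ofReal (∑' i, a i) = ENNReal.ofReal (∑' i, ENNReal.ofReal (a i)).toReal := by
  rw [ENNReal.tsum_toReal_eq fun _ => ENNReal.ofReal_ne_top]
  simp only [ENNReal.toReal_ofReal (ha _)]

theorem reflected_density_general {Ω : Type*} [MeasureSpace Ω]
    [IsProbabilityMeasure (volume : Measure Ω)]
    (Y : Ω → ℝ) (hY : Measurable Y)
    (p : ℝ → ℝ) (hp : Measurable p) (hnn : ∀ u, 0 ≤ p u)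
    (heven : ∀ u, p (-u) = p u)
    (hlaw : Measure.map Y (volume : Measure Ω) = volume.withDensity fun u => ENNReal.ofReal (p u)) :
    (∀ A : Set ℝ, MeasurableSet A → A ⊆ Set.Icc (-1 : ℝ) 1 →
      (volume : Measure Ω) {ω | g (f (Y ω)) ∈ A}
        = ∫⁻ u in A, ENNReal.ofReal (∑' k : ℤ, p (u - 2 * k))) ∧
    Measure.map (fun ω => g (f (Y ω))) (volume : Measure Ω) =
      volume.withDensity
        (Set.indicator (Set.Icc (-1 : ℝ) 1)
          fun u => ENNReal.ofReal (∑' k : ℤ, p (u - 2 * k))) := by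
  set Q := (Icc (-1 : ℝ) 1).indicator fun v => ∑' k : ℤ, ENNReal.ofReal (p (v - 2 * k))
  have hgfY : Measurable fun ω => g (f (Y ω)) := measurable_g_f.comp hY
  have hPm : Measurable fun u => ENNReal.ofReal (p u) := hp.ennreal_ofReal
  have hmapQ : (volume : Measure Ω).map (fun ω => g (f (Y ω))) = volume.withDensity Q := by
    refine (Measure.map_map measurable_g_f hY).symm.trans ?_
    rw [hlaw]
    exact map_withDensity_g_f hPm fun u => by rw [heven]
  have hQ : (fun u => ENNReal.ofReal (Q u).toReal)
      = (Icc (-1 : ℝ) 1).indicator fun u => ENNReal.ofReal (∑' k : ℤ, p (u - 2 * k)) := by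
    funext u
    by_cases hu : u ∈ Icc (-1 : ℝ) 1
    · simp [Q, hu, ofReal_tsum_eq_ofReal_toReal_tsum fun _ => hnn _]
    · simp [Q, hu]
  have hmap : (volume : Measure Ω).map (fun ω => g (f (Y ω)))
      = volume.withDensity ((Icc (-1 : ℝ) 1).indicator
          fun u => ENNReal.ofReal (∑' k : ℤ, p (u - 2 * k))) := by
    have : IsFiniteMeasure (volume.withDensity Q) := hmapQ ▸ inferInstance
    rw [← hQ, withDensity_ofReal_toReal, hmapQ]
    exact ((Measurable.tsum fun k => hPm.comp (measurable_sub_const _)).indicator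
      measurableSet_Icc).aemeasurable
  refine ⟨fun A hA hAsub => ?_, hmap⟩
  change volume ((fun ω => g (f (Y ω))) ⁻¹' A) = _
  rw [← Measure.map_apply hgfY hA, hmap, withDensity_apply _ hA,
    setLIntegral_indicator measurableSet_Icc, inter_eq_right.mpr hAsub]

/-- If the random variable `Y` has an even density `p`, then for every Borel set
`A ⊆ [-1,1]` the probability that `g (f (Y)) ∈ A` equals `∫_A ∑ₖ p (u - 2k) du`; in
particular the law of the reflected variable `g (f (Y))` has density
`u ↦ ∑ₖ p (u - 2k)` on `[-1,1]` and density `0` outside `[-1,1]`. -/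
theorem reflected_density {Ω : Type*} [MeasureSpace Ω]
    [IsProbabilityMeasure (volume : Measure Ω)]
    (Y : Ω → ℝ) (hY : Measurable Y)
    (p : ℝ → ℝ) (hp : Measurable p) (hnn : ∀ u, 0 ≤ p u)
    (heven : ∀ u, p (-u) = p u)
    (hone : ∫ u, p u = 1)
    (hlaw : Measure.map Y (volume : Measure Ω) = volume.withDensity fun u => ENNReal.ofReal (p u)) :
    (∀ A : Set ℝ, MeasurableSet A → A ⊆ Set.Icc (-1 : ℝ) 1 →
      (volume : Measure Ω) {ω | g (f (Y ω)) ∈ A}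
        = ∫⁻ u in A, ENNReal.ofReal (∑' k : ℤ, p (u - 2 * k))) ∧
    Measure.map (fun ω => g (f (Y ω))) (volume : Measure Ω) =
      volume.withDensity
        (Set.indicator (Set.Icc (-1 : ℝ) 1)
          fun u => ENNReal.ofReal (∑' k : ℤ, p (u - 2 * k))) :=
  reflected_density_general Y hY p hp hnn heven hlaw
end

section
/- Let Q₀ : ℝ → ℝ be nonnegative, even, 4-periodic, bounded, with ∫_{−2}^{2} Q₀(u) du = 1, and let c = inf_{u∈[−2,2)} Q₀(u). Then for every bounded measurable probability density μ on [−2,2) (μ ≥ 0, ∫_{−2}^{2} μ = 1), the function (μq)(u) = ∫_{−2}^{2} μ(v) Q₀(u − v) dv satisfies sup_{u∈[−2,2)} |(μq)(u) − 1/4| ≤ (1 − 4c) · sup_{v∈[−2,2)} |μ(v) − 1/4|. -/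
open MeasureTheory

/-! Since `∫ Q₀(u - v) dv = 1` for every `u` (periodicity) and `μ` has mean `1/4`, subtracting
the constants `1/4` from `μ` and `c` from the kernel does not change the deviation:
`(μq)(u) - 1/4 = ∫ (μ v - 1/4) (Q₀ (u - v) - c) dv`. The second factor is nonnegative with
integral `1 - 4c`, so the deviation is at most `(1 - 4c) · sup |μ - 1/4|`. This is the Doeblin
minorisation argument for the kernel `Q₀ (u - v) ≥ c`. -/

theorem IntervalIntegrable.bdd_mul {f g : ℝ → ℝ} {ν : Measure ℝ} {a b C : ℝ}
    (hg : IntervalIntegrable g ν a b) (hf : AEStronglyMeasurable f ν) (hfC : ∀ x, ‖f x‖ ≤ C) :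
    IntervalIntegrable (fun x => f x * g x) ν a b :=
  ⟨hg.1.bdd_mul hf.restrict (ae_of_all _ hfC), hg.2.bdd_mul hf.restrict (ae_of_all _ hfC)⟩

namespace Function.Periodic

theorem sInf_image_Ico_le {α : Type*} [ConditionallyCompleteLattice α] {f : ℝ → α} {a b : ℝ}
    (hf : Periodic f (b - a)) (hab : a < b) (hbdd : BddBelow (f '' Set.Ico a b)) (x : ℝ) :
    sInf (f '' Set.Ico a b) ≤ f x := by
  obtain ⟨y, hy, hxy⟩ := hf.exists_mem_Ico (sub_pos.2 hab) x a
  rw [add_sub_cancel] at hy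
  exact hxy ▸ csInf_le hbdd (Set.mem_image_of_mem f hy)

variable {E : Type*} [NormedAddCommGroup E] {f : ℝ → E} {a b : ℝ}

theorem intervalIntegrable_comp_sub_left (hf : Periodic f (b - a)) (hab : a ≠ b)
    (hfi : IntervalIntegrable f volume a b) (u : ℝ) :
    IntervalIntegrable (fun v => f (u - v)) volume a b := by
  have h := hf.intervalIntegrable (sub_ne_zero.2 hab.symm) (t := a) (by simpa) (u - b) (u - a)
  simpa using (h.comp_sub_left u).symm

theorem intervalIntegral_comp_sub_left_eq [NormedSpace ℝ E] (hf : Periodic f (b - a)) (u : ℝ) :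
    ∫ v in a..b, f (u - v) = ∫ v in a..b, f v := by
  rw [intervalIntegral.integral_comp_sub_left]
  simpa using hf.intervalIntegral_add_eq (u - b) a

end Function.Periodic

section Contraction

variable {μ k : ℝ → ℝ} {a b m c M : ℝ}

theorem integral_sub_mul_sub_eq (hμ : IntervalIntegrable μ volume a b)
    (hk : IntervalIntegrable k volume a b)
    (hμk : IntervalIntegrable (fun v => μ v * k v) volume a b)
    (hk1 : ∫ v in a..b, k v = 1) (hμm : ∫ v in a..b, μ v = m * (b - a)) :
    ∫ v in a..b, (μ v - m) * (k v - c) = (∫ v in a..b, μ v * k v) - m := by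
  have hexpand : (fun v => (μ v - m) * (k v - c))
      = fun v => μ v * k v - m * k v - (c * μ v - c * m) := by
    funext v; ring
  rw [hexpand, intervalIntegral.integral_sub (hμk.sub (hk.const_mul m))
      ((hμ.const_mul c).sub intervalIntegrable_const),
    intervalIntegral.integral_sub hμk (hk.const_mul m),
    intervalIntegral.integral_sub (hμ.const_mul c) intervalIntegrable_const,
    intervalIntegral.integral_const_mul, intervalIntegral.integral_const_mul,
    intervalIntegral.integral_const, hk1, hμm, smul_eq_mul]
  ring

theorem abs_integral_mul_sub_le (hab : a ≤ b) (hμ : IntervalIntegrable μ volume a b)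
    (hk : IntervalIntegrable k volume a b)
    (hμk : IntervalIntegrable (fun v => μ v * k v) volume a b)
    (hk1 : ∫ v in a..b, k v = 1) (hμm : ∫ v in a..b, μ v = m * (b - a))
    (hc : ∀ v ∈ Set.Ioo a b, c ≤ k v) (hM : ∀ v ∈ Set.Ioo a b, |μ v - m| ≤ M) :
    |(∫ v in a..b, μ v * k v) - m| ≤ (1 - (b - a) * c) * M := by
  have hkc : IntervalIntegrable (fun v => k v - c) volume a b := hk.sub intervalIntegrable_const
  have hprod : IntervalIntegrable (fun v => (μ v - m) * (k v - c)) volume a b := by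
    have hexpand : (fun v => (μ v - m) * (k v - c))
        = fun v => μ v * k v - c * μ v - m * (k v - c) := by
      funext v; ring
    rw [hexpand]
    exact (hμk.sub (hμ.const_mul c)).sub (hkc.const_mul m)
  have hpointwise : ∀ v ∈ Set.Ioo a b, |(μ v - m) * (k v - c)| ≤ M * (k v - c) := fun v hv => by
    rw [abs_mul, abs_of_nonneg (sub_nonneg.2 (hc v hv))]
    exact mul_le_mul_of_nonneg_right (hM v hv) (sub_nonneg.2 (hc v hv))
  rw [← integral_sub_mul_sub_eq hμ hk hμk hk1 hμm]
  calc |∫ v in a..b, (μ v - m) * (k v - c)|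
      ≤ ∫ v in a..b, |(μ v - m) * (k v - c)| := intervalIntegral.abs_integral_le_integral_abs hab
    _ ≤ ∫ v in a..b, M * (k v - c) :=
        intervalIntegral.integral_mono_on_of_le_Ioo hab hprod.abs (hkc.const_mul M) hpointwise
    _ = (1 - (b - a) * c) * M := by
        rw [intervalIntegral.integral_const_mul, intervalIntegral.integral_sub hk
          intervalIntegrable_const, hk1, intervalIntegral.integral_const, smul_eq_mul]
        ring

end Contraction

theorem one_step_contraction_general (Q₀ : ℝ → ℝ)
    (hnn : ∀ u, 0 ≤ Q₀ u)
    (hper : ∀ u, Q₀ (u + 4) = Q₀ u)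
    (hint : ∫ u in (-2 : ℝ)..2, Q₀ u = 1) :
    ∀ μ : ℝ → ℝ, Measurable μ → (∀ v, 0 ≤ μ v) → (∃ C : ℝ, ∀ v, μ v ≤ C) →
      (∫ v in (-2 : ℝ)..2, μ v = 1) →
      sSup ((fun u => |(∫ v in (-2 : ℝ)..2, μ v * Q₀ (u - v)) - 1 / 4|) ''
          Set.Ico (-2 : ℝ) 2)
        ≤ (1 - 4 * sInf (Q₀ '' Set.Ico (-2 : ℝ) 2)) *
            sSup ((fun v => |μ v - 1 / 4|) '' Set.Ico (-2 : ℝ) 2) := by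
  intro μ hμ_meas hμ_nonneg ⟨C, hμC⟩ hμ1
  have hT : Function.Periodic Q₀ (2 - (-2)) := by norm_num; exact hper
  have hQ : IntervalIntegrable Q₀ volume (-2) 2 :=
    intervalIntegral.intervalIntegrable_of_integral_ne_zero (by rw [hint]; exact one_ne_zero)
  have hμ_norm : ∀ v, ‖μ v‖ ≤ C := fun v => by
    rw [Real.norm_of_nonneg (hμ_nonneg v)]; exact hμC v
  have hμ : IntervalIntegrable μ volume (-2) 2 :=
    intervalIntegrable_const.mono_fun' hμ_meas.aestronglyMeasurable (ae_of_all _ hμ_norm)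
  have hc := hT.sInf_image_Ico_le (by norm_num) ⟨0, by rintro _ ⟨u, -, rfl⟩; exact hnn u⟩
  have hM : ∀ v ∈ Set.Ico (-2 : ℝ) 2,
      |μ v - 1 / 4| ≤ sSup ((fun v => |μ v - 1 / 4|) '' Set.Ico (-2 : ℝ) 2) := by
    refine fun v hv => le_csSup ⟨C + 1 / 4, ?_⟩ (Set.mem_image_of_mem _ hv)
    rintro _ ⟨w, -, rfl⟩
    exact abs_le.2 ⟨by linarith [hμ_nonneg w, hμC w], by linarith [hμC w]⟩
  refine csSup_le ((Set.nonempty_Ico.2 (by norm_num)).image _) ?_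
  rintro _ ⟨u, -, rfl⟩
  have hk := hT.intervalIntegrable_comp_sub_left (by norm_num) hQ u
  have hcontract := abs_integral_mul_sub_le (by norm_num) hμ hk
    (hk.bdd_mul hμ_meas.aestronglyMeasurable hμ_norm)
    (by rw [hT.intervalIntegral_comp_sub_left_eq, hint]) (by rw [hμ1]; norm_num)
    (fun v _ => hc (u - v)) (fun v hv => hM v (Set.Ioo_subset_Ico_self hv))
  rwa [show (2 : ℝ) - -2 = 4 by norm_num] at hcontract

/-- One step of the Markov kernel with symmetric transition density
`q (v, u) = Q₀ (u - v)` contracts the sup-distance to the uniform density `1/4`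
on `[-2,2)` by the factor `1 - 4c`, where `c = inf_{[-2,2)} Q₀`. -/
theorem one_step_contraction (Q₀ : ℝ → ℝ)
    (hnn : ∀ u, 0 ≤ Q₀ u)
    (heven : ∀ u, Q₀ (-u) = Q₀ u)
    (hper : ∀ u, Q₀ (u + 4) = Q₀ u)
    (hbdd : ∃ C : ℝ, ∀ u, Q₀ u ≤ C)
    (hint : ∫ u in (-2 : ℝ)..2, Q₀ u = 1) :
    ∀ μ : ℝ → ℝ, Measurable μ → (∀ v, 0 ≤ μ v) → (∃ C : ℝ, ∀ v, μ v ≤ C) →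
      (∫ v in (-2 : ℝ)..2, μ v = 1) →
      sSup ((fun u => |(∫ v in (-2 : ℝ)..2, μ v * Q₀ (u - v)) - 1 / 4|) ''
          Set.Ico (-2 : ℝ) 2)
        ≤ (1 - 4 * sInf (Q₀ '' Set.Ico (-2 : ℝ) 2)) *
            sSup ((fun v => |μ v - 1 / 4|) '' Set.Ico (-2 : ℝ) 2) :=
  one_step_contraction_general Q₀ hnn hper hint
end
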